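/- Continuity at 0 of the lifted map: suppose g : ℝ³ → ℝ³ satisfies: for every M ≥ 0 there exists N ≥ 0 such that (g(x))₃ ≤ -M whenever x₃ ≤ -N. Let T(x) = x - (1,1,0), and let F̃ : ℝ³ → ℝ³ be any function with F̃(0) = 0 and F̃(Z(T(x))) = Z(T(g(x))) for all x ∈ ℝ³. Then F̃ is continuous at 0. -/

import Mathlib

/-!
Write `Z x = exp x₃ • zorichProfile x₁ x₂`. The profile takes values in the surface
`max(|u₁|, |u₂|) + |u₃| = 1`, onto which it is surjective, and there `1/2 ≤ ‖u‖ ≤ √3`.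
Hence `‖Z x‖` is comparable to `exp x₃`, and by homogeneity `Z` maps `ℝ³` onto `ℝ³ ∖ {0}`:
the punctured neighbourhoods of `0` are exactly the images under `Z` of the filter `x₃ → -∞`.
Along that filter `F̃ ∘ Z = Z ∘ T ∘ g ∘ T⁻¹` tends to `0`, because `T` preserves `x₃`
and `g` sends `x₃ → -∞` to `x₃ → -∞` by property (III).
-/

/-- Explicit vector in ℝ³ (with the Euclidean norm). -/
def vec3 (a b c : ℝ) : EuclideanSpace ℝ (Fin 3) := WithLp.toLp 2 ![a, b, c]

/-- The 4-periodic sawtooth: h(t) = t on [-1,1], h(t) = 2 - t on [1,3]. -/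
noncomputable def h (t : ℝ) : ℝ := 1 - |4 * Int.fract ((t + 1) / 4) - 2|

/-- The sign function ε(t) = (-1)^⌊(t+1)/2⌋. -/
noncomputable def eps (t : ℝ) : ℝ := (-1 : ℝ) ^ ⌊(t + 1) / 2⌋

/-- The Zorich-type map Z : ℝ³ → ℝ³. -/
noncomputable def Z (x : EuclideanSpace ℝ (Fin 3)) : EuclideanSpace ℝ (Fin 3) :=
  Real.exp (x 2) •
    vec3 (h (x 0)) (h (x 1)) (eps (x 0) * eps (x 1) * (1 - max |h (x 0)| |h (x 1)|))

/-- Rotation by π about the vertical line {(u,v,t) : t ∈ ℝ}. -/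
noncomputable def Rot (u v : ℝ) (x : EuclideanSpace ℝ (Fin 3)) : EuclideanSpace ℝ (Fin 3) :=
  vec3 (2 * u - x 0) (2 * v - x 1) (x 2)

open Filter Topology

local notation "E³" => EuclideanSpace ℝ (Fin 3)

lemma abs_h_le_one (t : ℝ) : |h t| ≤ 1 := by
  have h0 := Int.fract_nonneg ((t + 1) / 4)
  have h1 := Int.fract_lt_one ((t + 1) / 4)
  have h2 : |4 * Int.fract ((t + 1) / 4) - 2| ≤ 2 := abs_le.mpr ⟨by linarith, by linarith⟩
  rw [h, abs_le]
  constructor <;> linarith [abs_nonneg (4 * Int.fract ((t + 1) / 4) - 2)]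

lemma h_of_abs_le {t : ℝ} (ht : |t| ≤ 1) : h t = t := by
  obtain ⟨h1, h2⟩ := abs_le.mp ht
  rw [h, Int.fract_eq_self.mpr ⟨by linarith, by linarith⟩, abs_of_nonpos (by linarith)]
  ring

lemma h_two_sub {t : ℝ} (ht : |t| < 1) : h (2 - t) = t := by
  obtain ⟨h1, h2⟩ := abs_lt.mp ht
  rw [h, Int.fract_eq_self.mpr ⟨by linarith, by linarith⟩, abs_of_nonneg (by linarith)]
  ring

lemma abs_eps (t : ℝ) : |eps t| = 1 := by
  simp [eps, abs_zpow]

lemma eps_of_abs_lt {t : ℝ} (ht : |t| < 1) : eps t = 1 := by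
  obtain ⟨h1, h2⟩ := abs_lt.mp ht
  rw [eps, Int.floor_eq_zero_iff.mpr ⟨by linarith, by linarith⟩, zpow_zero]

lemma eps_two_sub {t : ℝ} (ht : |t| < 1) : eps (2 - t) = -1 := by
  obtain ⟨h1, h2⟩ := abs_lt.mp ht
  have : ⌊(2 - t + 1) / 2⌋ = 1 :=
    Int.floor_eq_iff.mpr ⟨by push_cast; linarith, by push_cast; linarith⟩
  rw [eps, this, zpow_one]

lemma vec3_eta (u : E³) : vec3 (u 0) (u 1) (u 2) = u := by
  ext i; fin_cases i <;> rfl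

lemma EuclideanSpace.norm_le_sqrt_card {ι : Type*} [Fintype ι] {v : EuclideanSpace ℝ ι}
    (hv : ∀ i, ‖v i‖ ≤ 1) : ‖v‖ ≤ √(Fintype.card ι) := by
  rw [EuclideanSpace.norm_eq]
  refine Real.sqrt_le_sqrt ?_
  calc ∑ i, ‖v i‖ ^ 2 ≤ ∑ _i : ι, (1 : ℝ) :=
        Finset.sum_le_sum fun i _ => pow_le_one₀ (norm_nonneg _) (hv i)
    _ = Fintype.card ι := by simp

noncomputable def zorichProfile (a b : ℝ) : E³ :=
  vec3 (h a) (h b) (eps a * eps b * (1 - max |h a| |h b|))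

lemma Z_eq_smul (x : E³) : Z x = Real.exp (x 2) • zorichProfile (x 0) (x 1) := rfl

lemma Z_vec3 (a b t : ℝ) : Z (vec3 a b t) = Real.exp t • zorichProfile a b := rfl

lemma abs_zorichProfile_two (a b : ℝ) :
    |zorichProfile a b 2| = 1 - max |h a| |h b| := by
  change |eps a * eps b * (1 - max |h a| |h b|)| = _
  rw [abs_mul, abs_mul, abs_eps, abs_eps, one_mul, one_mul,
    abs_of_nonneg (sub_nonneg.2 (max_le (abs_h_le_one a) (abs_h_le_one b)))]

lemma norm_zorichProfile_le (a b : ℝ) : ‖zorichProfile a b‖ ≤ √3 := by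
  have hmax : 0 ≤ max |h a| |h b| := le_max_of_le_left (abs_nonneg _)
  simpa using EuclideanSpace.norm_le_sqrt_card (v := zorichProfile a b) fun i => by
    fin_cases i
    · exact abs_h_le_one a
    · exact abs_h_le_one b
    · change |zorichProfile a b 2| ≤ 1
      rw [abs_zorichProfile_two]; linarith

lemma one_le_two_mul_norm_zorichProfile (a b : ℝ) : 1 ≤ 2 * ‖zorichProfile a b‖ := by
  have hv (i : Fin 3) : |zorichProfile a b i| ≤ ‖zorichProfile a b‖ := by
    simpa using PiLp.norm_apply_le (zorichProfile a b) i
  have h0 : |h a| ≤ ‖zorichProfile a b‖ := hv 0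
  have h1 : |h b| ≤ ‖zorichProfile a b‖ := hv 1
  have h2 := hv 2
  rw [abs_zorichProfile_two] at h2
  linarith [max_le h0 h1]

lemma exists_zorichProfile_eq {u : E³} (hu : max |u 0| |u 1| + |u 2| = 1) :
    ∃ a b, zorichProfile a b = u := by
  set m := max |u 0| |u 1| with hm
  have hu0 : |u 0| ≤ m := le_max_left _ _
  have hu1 : |u 1| ≤ m := le_max_right _ _
  rcases (show m ≤ 1 by linarith [abs_nonneg (u 2)]).eq_or_lt with hm1 | hm1
  · have hu2 : u 2 = 0 := abs_eq_zero.mp (by linarith)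
    refine ⟨u 0, u 1, Eq.trans ?_ (vec3_eta u)⟩
    rw [zorichProfile, h_of_abs_le (by linarith), h_of_abs_le (by linarith), ← hm, hm1, hu2,
      sub_self, mul_zero]
  have hu0' : |u 0| < 1 := by linarith
  have hu1' : |u 1| < 1 := by linarith
  rcases (abs_eq (by linarith : 0 ≤ 1 - m)).mp (by linarith : |u 2| = 1 - m) with hu2 | hu2
  · refine ⟨u 0, u 1, Eq.trans ?_ (vec3_eta u)⟩
    rw [zorichProfile, h_of_abs_le hu0'.le, h_of_abs_le hu1'.le, eps_of_abs_lt hu0',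
      eps_of_abs_lt hu1', ← hm, hu2, one_mul, one_mul]
  · refine ⟨u 0, 2 - u 1, Eq.trans ?_ (vec3_eta u)⟩
    rw [zorichProfile, h_of_abs_le hu0'.le, h_two_sub hu1', eps_of_abs_lt hu0',
      eps_two_sub hu1', ← hm, hu2]
    congr 1
    ring

lemma exists_Z_eq_of_ne_zero {w : E³} (hw : w ≠ 0) : ∃ y, Z y = w := by
  set s := max |w 0| |w 1| + |w 2|
  have hs : 0 < s := by
    by_contra! hs
    refine hw (Eq.trans (vec3_eta w).symm ?_)
    have h0 : |w 0| ≤ s := le_add_of_le_of_nonneg (le_max_left _ _) (abs_nonneg _)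
    have h1 : |w 1| ≤ s := le_add_of_le_of_nonneg (le_max_right _ _) (abs_nonneg _)
    have h2 : |w 2| ≤ s := le_add_of_nonneg_left (le_max_of_le_left (abs_nonneg _))
    rw [abs_nonpos_iff.mp (h0.trans hs), abs_nonpos_iff.mp (h1.trans hs),
      abs_nonpos_iff.mp (h2.trans hs)]
    ext i; fin_cases i <;> rfl
  obtain ⟨a, b, hab⟩ := exists_zorichProfile_eq (u := s⁻¹ • w) (by
    simp only [PiLp.smul_apply, smul_eq_mul, abs_mul, abs_inv, abs_of_pos hs,
      ← mul_max_of_nonneg _ _ (inv_nonneg.2 hs.le), ← mul_add]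
    exact inv_mul_cancel₀ hs.ne')
  exact ⟨vec3 a b (Real.log s), by rw [Z_vec3, Real.exp_log hs, hab, smul_inv_smul₀ hs.ne']⟩

lemma norm_Z_le (x : E³) : ‖Z x‖ ≤ √3 * Real.exp (x 2) := by
  rw [Z_eq_smul, norm_smul, Real.norm_of_nonneg (Real.exp_pos _).le, mul_comm]
  gcongr
  exact norm_zorichProfile_le _ _

lemma exp_le_two_mul_norm_Z (x : E³) : Real.exp (x 2) ≤ 2 * ‖Z x‖ := by
  rw [Z_eq_smul, norm_smul, Real.norm_of_nonneg (Real.exp_pos _).le]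
  nlinarith [one_le_two_mul_norm_zorichProfile (x 0) (x 1), Real.exp_pos (x 2)]

def atBotHeight : Filter E³ := comap (fun x => x 2) atBot

lemma tendsto_atBotHeight_of_height_le {g : E³ → E³}
    (hg : ∀ M : ℝ, 0 ≤ M → ∃ N : ℝ, ∀ x : E³, x 2 ≤ -N → g x 2 ≤ -M) :
    Tendsto g atBotHeight atBotHeight := by
  rw [atBotHeight, tendsto_comap_iff, tendsto_atBot]
  intro b
  obtain ⟨N, hN⟩ := hg (max 0 (-b)) (le_max_left _ _)
  exact (tendsto_comap.eventually (eventually_le_atBot (-N))).mono fun x hx =>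
    (hN x hx).trans (by linarith [le_max_right 0 (-b)])

lemma tendsto_add_const_atBotHeight (c : E³) :
    Tendsto (· + c) atBotHeight atBotHeight := by
  rw [atBotHeight, tendsto_comap_iff]
  exact tendsto_atBot_add_const_right _ (c 2) tendsto_comap

lemma tendsto_Z_atBotHeight : Tendsto Z atBotHeight (𝓝 0) := by
  refine squeeze_zero_norm norm_Z_le ?_
  rw [atBotHeight]
  simpa using (Real.tendsto_exp_atBot.comp tendsto_comap).const_mul √3

lemma nhdsNE_le_map_Z_atBotHeight : 𝓝[≠] (0 : E³) ≤ map Z atBotHeight := by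
  rw [atBotHeight, ((atBot_basis.comap _).map Z).ge_iff]
  intro N _
  rw [Metric.mem_nhdsWithin_iff]
  refine ⟨Real.exp N / 2, by positivity, ?_⟩
  rintro w ⟨hw, hw0 : w ≠ 0⟩
  obtain ⟨y, rfl⟩ := exists_Z_eq_of_ne_zero hw0
  refine ⟨y, ?_, rfl⟩
  rw [mem_ball_zero_iff] at hw
  exact Real.exp_le_exp.mp (by linarith [exp_le_two_mul_norm_Z y])

/-- Continuity at 0 of the lifted map: if g pushes far-down points arbitrarily
    far down (property (III)) and F̃ satisfies F̃(0) = 0 and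
    F̃(Z(T(x))) = Z(T(g(x))) where T(x) = x - (1,1,0), then F̃ is continuous at 0. -/
theorem lifted_map_continuous_at_zero
    (g : EuclideanSpace ℝ (Fin 3) → EuclideanSpace ℝ (Fin 3))
    (hIII : ∀ M : ℝ, 0 ≤ M → ∃ N : ℝ, 0 ≤ N ∧
      ∀ x : EuclideanSpace ℝ (Fin 3), x 2 ≤ -N → g x 2 ≤ -M)
    (F : EuclideanSpace ℝ (Fin 3) → EuclideanSpace ℝ (Fin 3))
    (hF0 : F 0 = 0)
    (hF : ∀ x : EuclideanSpace ℝ (Fin 3),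
      F (Z (x - vec3 1 1 0)) = Z (g x - vec3 1 1 0)) :
    ContinuousAt F 0 := by
  have hFZ : F ∘ Z = fun y => Z (g (y + vec3 1 1 0) - vec3 1 1 0) :=
    funext fun y => by simpa using hF (y + vec3 1 1 0)
  have hg : Tendsto g atBotHeight atBotHeight :=
    tendsto_atBotHeight_of_height_le fun M hM => (hIII M hM).imp fun _ => And.right
  have hFZ_tendsto : Tendsto (F ∘ Z) atBotHeight (𝓝 0) := by
    rw [hFZ]
    simp only [sub_eq_add_neg]
    exact tendsto_Z_atBotHeight.comp <| (tendsto_add_const_atBotHeight _).comp <|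
      hg.comp (tendsto_add_const_atBotHeight _)
  rw [← continuousWithinAt_compl_self, ContinuousWithinAt, hF0]
  exact (tendsto_map'_iff.mpr hFZ_tendsto).mono_left nhdsNE_le_map_Z_atBotHeight
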